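/- Let h be an m-uniform morphism (m ≥ 2) with fixed point w, let k ≥ 2, and let i be such that m^i ≥ k − 1. Then every factor of w of length m^i(n+1) can be written as p·h^i(u)·q where u is a factor of w of length n and |p| + |q| = m^i, and the k-Abelian class of p·h^i(u)·q is determined by p, q, and the 2-Abelian class of u. Consequently ρ^{(k)}_w(m^i(n+1)) ≤ C · ρ^{(2)}_w(n) for a constant C depending only on m, i, k and the alphabet. -/

import Mathlib

/-- Number of occurrences of `x` as a factor of `u`. -/
def occ {α : Type*} [DecidableEq α] (u x : List α) : ℕ :=
  ((List.range (u.length + 1)).filter (fun i => decide (x <+: u.drop i))).length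

/-- `k`-Abelian equivalence: same number of occurrences of every word of length at most `k`. -/
def KAbEq {α : Type*} [DecidableEq α] (k : ℕ) (u v : List α) : Prop :=
  ∀ x : List α, x.length ≤ k → occ u x = occ v x

/-- The factor of the infinite word `w` of length `n` starting at position `i`. -/
def factorAt {α : Type*} (w : ℕ → α) (i n : ℕ) : List α :=
  (List.range n).map (fun j => w (i + j))

/-- `k`-Abelian complexity: the number of `k`-Abelian classes of length-`n` factors of `w`. -/
noncomputable def rho {α : Type*} [DecidableEq α] (k : ℕ) (w : ℕ → α) (n : ℕ) : ℕ :=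
  Set.ncard { C : Set (List α) | ∃ i : ℕ,
    C = { v | (∃ j : ℕ, v = factorAt w j n) ∧ KAbEq k v (factorAt w i n) } }

/-- Iterate of the morphism `h` applied to a finite word. -/
def morphIter {α : Type*} (h : α → List α) : ℕ → List α → List α
  | 0, u => u
  | i + 1, u => (morphIter h i u).flatMap h

/-!
A factor of length `m^i (n+1)` of the fixed point starts inside some block `h^i(w_j)`, so it
is `p · h^i(u) · q` with `u` a factor of length `n` and `|p| + |q| = m^i`. An occurrence of a
word `x` with `|x| ≤ k` in `h^i(u)` lies inside one block `h^i(a)` or straddles two consecutive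
blocks `h^i(a) h^i(b)`; as `|x| - 1 ≤ m^i` it sees no third block. Hence the number of such
occurrences depends only on the letter and 2-factor counts of `u`, that is, on its 2-Abelian
class. That class also fixes the first and last letters of `u`, hence the `k - 1` letters of
`h^i(u)` next to `p` and `q`. The `k`-Abelian class of the factor is thus a function of `p`, `q`
and the 2-Abelian class of `u`, which gives the bound on `ρ^{(k)}`.
-/

open scoped List

namespace List

variable {α : Type*}

theorem prefix_append_iff_prefix_append_take {x l t : List α} {c : ℕ}
    (hc : x.length ≤ l.length + c) : x <+: l ++ t ↔ x <+: l ++ t.take c := by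
  rw [prefix_iff_eq_take, prefix_iff_eq_take, take_append, take_append, take_take,
    Nat.min_eq_left (by omega)]

theorem rtake_rtake (l : List α) {m n : ℕ} (h : m ≤ n) : (l.rtake n).rtake m = l.rtake m := by
  simp only [rtake_eq_reverse_take_reverse, reverse_reverse, take_take, Nat.min_eq_left h]

theorem map_fst_zip_tail (l : List α) : (l.zip l.tail).map Prod.fst = l.dropLast := by
  rw [zip_eq_zip_take_min, map_fst_zip] <;> simp [dropLast_eq_take]

theorem Perm.eq_of_length_le_one :
    ∀ {l₁ l₂ : List α}, l₁ ~ l₂ → l₁.length ≤ 1 → l₁ = l₂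
  | [], _, h, _ => h.nil_eq
  | [_], _, h, _ => (perm_singleton.1 h.symm).symm
  | _ :: _ :: _, _, _, hl => absurd hl (by simp)

end List

section Occurrences

variable {α : Type*} [DecidableEq α]

theorem occ_nil_left {x : List α} (hx : x ≠ []) : occ [] x = 0 := by
  simp [occ, List.prefix_nil, hx]

theorem occ_nil_right (u : List α) : occ u [] = u.length + 1 := by
  simp [occ]

theorem occ_eq_zero_of_length_lt {u x : List α} (hl : u.length < x.length) : occ u x = 0 := by
  refine List.length_eq_zero_iff.2 (List.filter_eq_nil_iff.2 fun i _ hp => ?_)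
  have := (of_decide_eq_true hp).length_le
  simp only [List.length_drop] at this
  omega

theorem occ_cons (a : α) (u x : List α) :
    occ (a :: u) x = (if x <+: a :: u then 1 else 0) + occ u x := by
  unfold occ
  rw [List.length_cons, List.range_succ_eq_map, List.filter_cons, List.filter_map]
  by_cases hx : x <+: a :: u <;> simp [hx, Function.comp_def, Nat.add_comm]

theorem occ_singleton (u : List α) (a : α) : occ u [a] = u.count a := by
  induction u with
  | nil => simp [occ_nil_left]
  | cons b u ih =>
    rw [occ_cons, ih, List.count_cons, Nat.add_comm]
    simp [List.cons_prefix_cons, @eq_comm _ a]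

theorem occ_pair : ∀ (u : List α) (a b : α), occ u [a, b] = (u.zip u.tail).count (a, b)
  | [], _, _ => occ_nil_left (by simp)
  | [_], _, _ => occ_eq_zero_of_length_lt (by simp)
  | c :: c' :: u, a, b => by
    rw [occ_cons, occ_pair (c' :: u)]
    simp [List.cons_prefix_cons, List.count_cons, Nat.add_comm, @eq_comm _ a, @eq_comm _ b]

theorem occ_append {s t x : List α} (hx : x ≠ []) :
    occ (s ++ t) x =
      occ s x + occ (s.rtake (x.length - 1) ++ t.take (x.length - 1)) x + occ t x := by
  set d := x.length - 1
  have hxd : x.length = d + 1 := by have := List.length_pos_iff.2 hx; omega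
  induction s with
  | nil =>
    have : (t.take d).length < x.length := by have := List.length_take_le d t; omega
    simp [occ_nil_left hx, occ_eq_zero_of_length_lt this]
  | cons a s ih =>
    suffices (if x <+: a :: (s ++ t) then 1 else 0) + occ (s.rtake d ++ t.take d) x =
        (if x <+: a :: s then 1 else 0) + occ ((a :: s).rtake d ++ t.take d) x by
      rw [List.cons_append, occ_cons, ih, occ_cons]
      omega
    by_cases hds : d ≤ s.length
    · have hrtake : (a :: s).rtake d = s.rtake d := by
        simp only [List.rtake, List.length_cons, Nat.succ_sub hds, List.drop_succ_cons]
      have hpre := List.prefix_append_iff_prefix_append_take (x := x) (l := a :: s) (t := t)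
        (c := 0) (by simp; omega)
      simp_all
    · have hnot : ¬ x <+: a :: s := fun hp => by have := hp.length_le; simp at this; omega
      have hpre := List.prefix_append_iff_prefix_append_take (x := x) (l := a :: s) (t := t)
        (c := d) (by simp; omega)
      rw [List.rtake, Nat.sub_eq_zero_of_le (by omega), List.drop_zero, List.rtake,
        Nat.sub_eq_zero_of_le (by simp; omega), List.drop_zero, List.cons_append, occ_cons,
        if_neg hnot]
      simp_all

end Occurrences

namespace KAbEq

variable {α : Type*} [DecidableEq α] {k : ℕ} {u v t : List α}

protected theorem refl (k : ℕ) (u : List α) : KAbEq k u u := fun _ _ => rfl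

protected theorem symm (he : KAbEq k u v) : KAbEq k v u := fun x hx => (he x hx).symm

protected theorem trans (he : KAbEq k u v) (he' : KAbEq k v t) : KAbEq k u t :=
  fun x hx => (he x hx).trans (he' x hx)

theorem length_eq (he : KAbEq k u v) : u.length = v.length := by
  simpa [occ_nil_right] using he [] (Nat.zero_le k)

theorem perm (he : KAbEq k u v) (hk : 1 ≤ k) : u ~ v :=
  List.perm_iff_count.2 fun a => by
    rw [← occ_singleton, ← occ_singleton, he [a] (by simpa using hk)]

theorem zip_tail_perm (he : KAbEq k u v) (hk : 2 ≤ k) : u.zip u.tail ~ v.zip v.tail :=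
  List.perm_iff_count.2 fun ⟨a, b⟩ => by
    rw [← occ_pair, ← occ_pair, he [a, b] (by simpa using hk)]

theorem take_one_eq (he : KAbEq k u v) (hk : 2 ≤ k) : u.take 1 = v.take 1 := by
  have htail : u.tail ~ v.tail := by
    simpa [List.map_snd_zip] using (he.zip_tail_perm hk).map Prod.snd
  have h : u.take 1 ++ u.tail ~ v.take 1 ++ v.tail := by
    simpa only [← List.drop_one, List.take_append_drop] using he.perm (by omega)
  have hhead : u.take 1 ~ v.take 1 :=
    (List.perm_append_right_iff _).1 (h.trans ((List.perm_append_left_iff _).2 htail.symm))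
  exact hhead.eq_of_length_le_one (by simp)

theorem rtake_one_eq (he : KAbEq k u v) (hk : 2 ≤ k) : u.rtake 1 = v.rtake 1 := by
  have hinit : u.dropLast ~ v.dropLast := by
    simpa [List.map_fst_zip_tail] using (he.zip_tail_perm hk).map Prod.fst
  have h : u.dropLast ++ u.rtake 1 ~ v.dropLast ++ v.rtake 1 := by
    simpa only [List.dropLast_eq_take, List.rtake, List.take_append_drop] using he.perm (by omega)
  have hlast : u.rtake 1 ~ v.rtake 1 :=
    (List.perm_append_left_iff _).1 (((List.perm_append_right_iff _).2 hinit.symm).trans h)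
  exact hlast.eq_of_length_le_one (by simp [List.rtake]; omega)

theorem append_left (he : KAbEq k u v) (htake : u.take (k - 1) = v.take (k - 1))
    (p : List α) : KAbEq k (p ++ u) (p ++ v) := by
  intro x hx
  by_cases hx0 : x = []
  · simp [hx0, occ_nil_right, he.length_eq]
  have hd : u.take (x.length - 1) = v.take (x.length - 1) := by
    have := congrArg (List.take (x.length - 1)) htake
    rwa [List.take_take, List.take_take, Nat.min_eq_left (by omega)] at this
  rw [occ_append (s := p) hx0, occ_append (s := p) hx0, he x hx, hd]
theorem append_right (he : KAbEq k u v) (hrtake : u.rtake (k - 1) = v.rtake (k - 1))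
    (q : List α) : KAbEq k (u ++ q) (v ++ q) := by
  intro x hx
  by_cases hx0 : x = []
  · simp [hx0, occ_nil_right, he.length_eq]
  have hd : u.rtake (x.length - 1) = v.rtake (x.length - 1) := by
    have := congrArg (List.rtake · (x.length - 1)) hrtake
    simpa only [List.rtake_rtake _ (by omega : x.length - 1 ≤ k - 1)] using this
  rw [occ_append (s := u) hx0, occ_append (s := v) hx0, he x hx, hd]

theorem append_append (he : KAbEq k u v) (htake : u.take (k - 1) = v.take (k - 1))
    (hrtake : u.rtake (k - 1) = v.rtake (k - 1)) (p q : List α) :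
    KAbEq k (p ++ u ++ q) (p ++ v ++ q) := by
  rw [List.append_assoc, List.append_assoc]
  refine (he.append_right hrtake q).append_left ?_ p
  rw [List.take_append, List.take_append, htake, he.length_eq]

end KAbEq

section FlatMap

variable {α β : Type*} {g : α → List β} {M : ℕ}

theorem take_flatMap_of_length_eq (hg : ∀ a, (g a).length = M) {d : ℕ} (hd : d ≤ M) :
    ∀ u : List α, (u.flatMap g).take d = ((u.take 1).flatMap g).take d
  | [] => rfl
  | a :: u => by
    simp [List.take_append_of_le_length (hd.trans (hg a).ge)]

theorem rtake_flatMap_of_length_eq (hg : ∀ a, (g a).length = M) {d : ℕ} (hd : d ≤ M)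
    (u : List α) : (u.flatMap g).rtake d = ((u.rtake 1).flatMap g).rtake d := by
  have := take_flatMap_of_length_eq (g := List.reverse ∘ g) (by simpa using hg) hd u.reverse
  simp only [List.rtake_eq_reverse_take_reverse, List.reverse_flatMap, List.reverse_reverse,
    this]

theorem occ_flatMap [DecidableEq β] (hg : ∀ a, (g a).length = M) {x : List β} (hx : x ≠ [])
    (hxM : x.length - 1 ≤ M) : ∀ u : List α,
    occ (u.flatMap g) x = (u.map fun a => occ (g a) x).sum +
      ((u.zip u.tail).map fun ab =>
        occ ((g ab.1).rtake (x.length - 1) ++ (g ab.2).take (x.length - 1)) x).sum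
  | [] => by simp [occ_nil_left hx]
  | [_] => by simp
  | c :: c' :: u => by
    rw [List.flatMap_cons, occ_append hx, List.flatMap_cons,
      List.take_append_of_le_length (hxM.trans (hg c').ge), ← List.flatMap_cons,
      occ_flatMap hg hx hxM (c' :: u)]
    simp only [List.map_cons, List.sum_cons, List.tail_cons, List.zip_cons_cons]
    ring

theorem KAbEq.flatMap [DecidableEq α] [DecidableEq β] {k : ℕ} {u v : List α} (he : KAbEq 2 u v)
    (hg : ∀ a, (g a).length = M) (hkM : k - 1 ≤ M) : KAbEq k (u.flatMap g) (v.flatMap g) := by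
  intro x hx
  by_cases hx0 : x = []
  · rw [hx0, occ_nil_right, occ_nil_right, ((he.perm one_le_two).flatMap_right g).length_eq]
  rw [occ_flatMap hg hx0 (by omega), occ_flatMap hg hx0 (by omega),
    ((he.perm one_le_two).map _).sum_eq, ((he.zip_tail_perm le_rfl).map _).sum_eq]

theorem KAbEq.flatMap_append_append [DecidableEq α] [DecidableEq β] {k : ℕ} {u v : List α}
    (he : KAbEq 2 u v) (hg : ∀ a, (g a).length = M) (hkM : k - 1 ≤ M) (p q : List β) :
    KAbEq k (p ++ u.flatMap g ++ q) (p ++ v.flatMap g ++ q) :=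
  (he.flatMap hg hkM).append_append
    (by rw [take_flatMap_of_length_eq hg hkM u, take_flatMap_of_length_eq hg hkM v,
      he.take_one_eq le_rfl])
    (by rw [rtake_flatMap_of_length_eq hg hkM u, rtake_flatMap_of_length_eq hg hkM v,
      he.rtake_one_eq le_rfl]) p q

end FlatMap

section Morphism

variable {α : Type*} {h : α → List α} {m : ℕ}

theorem morphIter_eq_flatMap (h : α → List α) (i : ℕ) (u : List α) :
    morphIter h i u = u.flatMap fun a => morphIter h i [a] := by
  induction i with
  | zero => simp [morphIter]
  | succ i ih => rw [morphIter, ih, List.flatMap_assoc]; rfl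

theorem length_morphIter_singleton (hunif : ∀ a, (h a).length = m) (i : ℕ) (a : α) :
    (morphIter h i [a]).length = m ^ i := by
  induction i with
  | zero => rfl
  | succ i ih => simp [morphIter, List.length_flatMap, hunif, ih, pow_succ]

theorem KAbEq.morphIter_append_append [DecidableEq α] {k i : ℕ} {u v : List α}
    (he : KAbEq 2 u v) (hunif : ∀ a, (h a).length = m) (hi : k - 1 ≤ m ^ i) (p q : List α) :
    KAbEq k (p ++ morphIter h i u ++ q) (p ++ morphIter h i v ++ q) := by
  rw [morphIter_eq_flatMap, morphIter_eq_flatMap]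
  exact he.flatMap_append_append (length_morphIter_singleton hunif i) hi p q

theorem length_factorAt (w : ℕ → α) (l n : ℕ) : (factorAt w l n).length = n := by
  simp [factorAt]

theorem factorAt_add (w : ℕ → α) (l n₁ n₂ : ℕ) :
    factorAt w l (n₁ + n₂) = factorAt w l n₁ ++ factorAt w (l + n₁) n₂ := by
  simp only [factorAt, List.range_add, List.map_append, List.map_map, Function.comp_def,
    Nat.add_assoc]

variable {w : ℕ → α}

theorem factorAt_mul_self (hunif : ∀ a, (h a).length = m)
    (hfix : ∀ j : ℕ, w j = (h (w (j / m))).getD (j % m) (w 0)) (j : ℕ) :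
    factorAt w (m * j) m = h (w j) := by
  refine List.ext_getElem (by simp [length_factorAt, hunif]) fun r hr _ => ?_
  have hrm : r < m := by simpa [length_factorAt] using hr
  have hdiv : (m * j + r) / m = j := by
    rw [Nat.mul_add_div (by omega), Nat.div_eq_of_lt hrm, Nat.add_zero]
  simp only [factorAt, List.getElem_map, List.getElem_range]
  rw [hfix, hdiv, Nat.mul_add_mod, Nat.mod_eq_of_lt hrm, List.getD_eq_getElem]

theorem factorAt_mul_mul (hunif : ∀ a, (h a).length = m)
    (hfix : ∀ j : ℕ, w j = (h (w (j / m))).getD (j % m) (w 0)) (j n : ℕ) :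
    factorAt w (m * j) (m * n) = (factorAt w j n).flatMap h := by
  induction n with
  | zero => simp [factorAt]
  | succ n ih =>
    rw [Nat.mul_succ, factorAt_add, ih, ← Nat.mul_add, factorAt_mul_self hunif hfix,
      factorAt_add w j n 1]
    simp [factorAt]

theorem factorAt_pow_mul (hunif : ∀ a, (h a).length = m)
    (hfix : ∀ j : ℕ, w j = (h (w (j / m))).getD (j % m) (w 0)) (i j n : ℕ) :
    factorAt w (m ^ i * j) (m ^ i * n) = morphIter h i (factorAt w j n) := by
  induction i generalizing j n with
  | zero => simp [morphIter]
  | succ i ih =>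
    rw [pow_succ', Nat.mul_assoc, Nat.mul_assoc, factorAt_mul_mul hunif hfix, ih]
    rfl

theorem exists_factorAt_eq_append_morphIter (hm : 0 < m) (hunif : ∀ a, (h a).length = m)
    (hfix : ∀ j : ℕ, w j = (h (w (j / m))).getD (j % m) (w 0)) (i n l : ℕ) :
    ∃ (p q u : List α) (j : ℕ), factorAt w l (m ^ i * (n + 1)) = p ++ morphIter h i u ++ q ∧
      u = factorAt w j n ∧ p.length + q.length = m ^ i := by
  have hM : l % m ^ i < m ^ i := Nat.mod_lt l (pow_pos hm i)
  have hj : l + (m ^ i - l % m ^ i) = m ^ i * (l / m ^ i + 1) := by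
    have := Nat.div_add_mod l (m ^ i)
    rw [Nat.mul_succ]
    omega
  -- cut at `m ^ i * (l / m ^ i + 1)`, the first block boundary strictly after `l`
  refine ⟨factorAt w l (m ^ i - l % m ^ i), factorAt w (m ^ i * (l / m ^ i + 1) + m ^ i * n)
    (l % m ^ i), _, l / m ^ i + 1, ?_, rfl, by simp only [length_factorAt]; omega⟩
  rw [show m ^ i * (n + 1) = (m ^ i - l % m ^ i) + (m ^ i * n + l % m ^ i) by
      rw [Nat.mul_succ]; omega,
    factorAt_add, hj, factorAt_add, factorAt_pow_mul hunif hfix, List.append_assoc]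

end Morphism

theorem Set.ncard_range_le_of_factorsThrough {ι β γ : Type*} {f : ι → β} {g : ι → γ}
    {t : Set β} (ht : t.Finite) (hf : ∀ i, f i ∈ t) (hg : g.FactorsThrough f) :
    (Set.range g).ncard ≤ t.ncard := by
  rcases isEmpty_or_nonempty ι with hι | ⟨⟨i₀⟩⟩
  · simp [Set.range_eq_empty]
  have hfac : g = Function.extend f g (fun _ => g i₀) ∘ f :=
    funext fun i => (hg.extend_apply _ i).symm
  have hft : Set.range f ⊆ t := Set.range_subset_iff.2 hf
  rw [hfac, Set.range_comp]
  exact (Set.ncard_image_le (ht.subset hft)).trans (Set.ncard_le_ncard hft ht)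

section Complexity

variable {α : Type*} [DecidableEq α]

def kAbClass (k : ℕ) (w : ℕ → α) (n l : ℕ) : Set (List α) :=
  {v | (∃ j, v = factorAt w j n) ∧ KAbEq k v (factorAt w l n)}

theorem rho_eq_ncard_range_kAbClass (k : ℕ) (w : ℕ → α) (n : ℕ) :
    rho k w n = (Set.range (kAbClass k w n)).ncard := by
  simp only [rho, kAbClass, Set.range, eq_comm]

theorem kAbClass_eq_kAbClass_iff {k : ℕ} {w : ℕ → α} {n l l' : ℕ} :
    kAbClass k w n l = kAbClass k w n l' ↔ KAbEq k (factorAt w l n) (factorAt w l' n) := by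
  refine ⟨fun h => ?_, fun he => Set.ext fun v => ?_⟩
  · have : factorAt w l n ∈ kAbClass k w n l' := h ▸ ⟨⟨l, rfl⟩, KAbEq.refl _ _⟩
    exact this.2
  · exact ⟨fun hv => ⟨hv.1, hv.2.trans he⟩, fun hv => ⟨hv.1, hv.2.trans he.symm⟩⟩

theorem finite_range_kAbClass [Finite α] (k : ℕ) (w : ℕ → α) (n : ℕ) :
    (Set.range (kAbClass k w n)).Finite :=
  (List.finite_length_le α n).finite_subsets.subset <| Set.range_subset_iff.2 fun _ _ hv => by
    obtain ⟨⟨j, rfl⟩, -⟩ := hv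
    exact (length_factorAt w j n).le

theorem rho_le_ncard_mul_rho [Finite α] {k k' N n M : ℕ} {w : ℕ → α}
    (φ : List α → List α)
    (hdec : ∀ l, ∃ (p q u : List α) (j : ℕ),
      factorAt w l N = p ++ φ u ++ q ∧ u = factorAt w j n ∧ p.length + q.length = M)
    (hφ : ∀ p q u v : List α, KAbEq k' u v → KAbEq k (p ++ φ u ++ q) (p ++ φ v ++ q)) :
    rho k w N ≤ {pq : List α × List α | pq.1.length + pq.2.length = M}.ncard * rho k' w n := by
  choose p q u j hfac hu hpq using hdec
  have hsig : (kAbClass k w N).FactorsThrough fun l => ((p l, q l), kAbClass k' w n (j l)) := by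
    intro l l' hll'
    simp only [Prod.mk.injEq] at hll'
    obtain ⟨⟨hp, hq⟩, hcls⟩ := hll'
    rw [kAbClass_eq_kAbClass_iff] at hcls ⊢
    rw [hfac, hfac, hp, hq, hu, hu]
    exact hφ _ _ _ _ hcls
  have hP : {pq : List α × List α | pq.1.length + pq.2.length = M}.Finite :=
    ((List.finite_length_le α M).prod (List.finite_length_le α M)).subset
      fun pq (hpq : _ = M) => ⟨by simp; omega, by simp; omega⟩
  rw [rho_eq_ncard_range_kAbClass, rho_eq_ncard_range_kAbClass, ← Set.ncard_prod]
  exact Set.ncard_range_le_of_factorsThrough (hP.prod (finite_range_kAbClass k' w n))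
    (fun l => Set.mk_mem_prod (hpq l) ⟨j l, rfl⟩) hsig

end Complexity

theorem stmt15_general {α : Type*} [Fintype α] [DecidableEq α]
    (m : ℕ) (hm : 2 ≤ m) (h : α → List α) (hunif : ∀ a, (h a).length = m)
    (w : ℕ → α)
    (hfix : ∀ j : ℕ, w j = (h (w (j / m))).getD (j % m) (w 0))
    (k : ℕ) (i : ℕ) (hi : k - 1 ≤ m ^ i) :
    (∀ n l : ℕ, ∃ (p q u : List α) (j : ℕ),
      factorAt w l (m ^ i * (n + 1)) = p ++ morphIter h i u ++ q ∧
      u = factorAt w j n ∧ p.length + q.length = m ^ i) ∧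
    (∀ p q u v : List α, KAbEq 2 u v →
      KAbEq k (p ++ morphIter h i u ++ q) (p ++ morphIter h i v ++ q)) ∧
    (∃ C : ℕ, ∀ n : ℕ, rho k w (m ^ i * (n + 1)) ≤ C * rho 2 w n) := by
  have hdec := exists_factorAt_eq_append_morphIter (by omega : 0 < m) hunif hfix i
  have hmorph : ∀ p q u v : List α, KAbEq 2 u v →
      KAbEq k (p ++ morphIter h i u ++ q) (p ++ morphIter h i v ++ q) :=
    fun p q _ _ he => he.morphIter_append_append hunif hi p q
  exact ⟨hdec, hmorph, _, fun n => rho_le_ncard_mul_rho _ (hdec n) hmorph⟩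

theorem stmt15 {α : Type*} [Fintype α] [DecidableEq α]
    (m : ℕ) (hm : 2 ≤ m) (h : α → List α) (hunif : ∀ a, (h a).length = m)
    (w : ℕ → α)
    (hfix : ∀ j : ℕ, w j = (h (w (j / m))).getD (j % m) (w 0))
    (k : ℕ) (hk : 2 ≤ k) (i : ℕ) (hi : k - 1 ≤ m ^ i) :
    (∀ n l : ℕ, ∃ (p q u : List α) (j : ℕ),
      factorAt w l (m ^ i * (n + 1)) = p ++ morphIter h i u ++ q ∧
      u = factorAt w j n ∧ p.length + q.length = m ^ i) ∧
    (∀ p q u v : List α, KAbEq 2 u v →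
      KAbEq k (p ++ morphIter h i u ++ q) (p ++ morphIter h i v ++ q)) ∧
    (∃ C : ℕ, ∀ n : ℕ, rho k w (m ^ i * (n + 1)) ≤ C * rho 2 w n) :=
  stmt15_general m hm h hunif w hfix k i hi
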